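/- For ε₁, ε₂ ∈ (0,1), P(T) of Proposition 1 satisfies the bound P(T) ≤ ε₁(1-ε₂)² · T · (max(ε₁ε₂, ε₁ε₂(1-ε₁)(1-ε₂), 1-ε₁))^{⌈(T-1)/2⌉} · C for some constant C depending only on ε₁, ε₂; in particular P(T) → 0 as T → ∞. -/

import Mathlib

open Filter

/-- Inner sum over nonnegative integers `t₂, t₃` with `2*t₂ + t₃ = n`
of `a^t₂ * b^t₃`. -/
noncomputable def innerSum (a b : ℝ) (n : ℕ) : ℝ :=
  ∑ t₂ ∈ Finset.range (n + 1), ∑ t₃ ∈ Finset.range (n + 1),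
    if 2 * t₂ + t₃ = n then a ^ t₂ * b ^ t₃ else 0

/-- The chain-duration probability `P(T)` of Proposition 1. -/
noncomputable def chainP (ε₁ ε₂ : ℝ) (T : ℕ) : ℝ :=
  ε₁ * (1 - ε₂) ^ 2 *
    ∑ t₁ ∈ Finset.range T,
      (ε₁ * ε₂) ^ t₁ *
        innerSum (ε₁ * ε₂ * (1 - ε₁) * (1 - ε₂)) (1 - ε₁) (T - 1 - t₁)

/-!
Let `q < 1` be the largest of the three weights. Every summand of `P(T)` is a product of
weights of total "length" `T - 1`, where the weight `ε₁ε₂(1-ε₁)(1-ε₂) ≤ q²` counts twice, so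
each summand is at most `q^(T-1)`, and there are at most `T²` of them. Splitting
`q^(T-1) = q^(T/2) q^((T-1)/2)`, the extra factor `T q^((T-1)/2)` is bounded by `2/(1-q)`.
-/

open Finset

section Bounds

variable {a b c q : ℝ}

lemma innerSum_nonneg (ha : 0 ≤ a) (hb : 0 ≤ b) (n : ℕ) : 0 ≤ innerSum a b n :=
  sum_nonneg fun _ _ => sum_nonneg fun _ _ => by split_ifs <;> positivity

lemma innerSum_le_succ_mul_pow (ha : 0 ≤ a) (hb : 0 ≤ b) (haq : a ≤ q ^ 2) (hbq : b ≤ q)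
    (n : ℕ) : innerSum a b n ≤ (n + 1) * q ^ n := by
  have hq : 0 ≤ q := hb.trans hbq
  have hterm : ∀ t₂ t₃ : ℕ, (if 2 * t₂ + t₃ = n then a ^ t₂ * b ^ t₃ else 0) ≤
      if t₃ = n - 2 * t₂ then q ^ n else 0 := by
    intro t₂ t₃
    by_cases h : 2 * t₂ + t₃ = n
    · rw [if_pos h, if_pos (by omega), ← h, pow_add, pow_mul]
      gcongr
    · rw [if_neg h]
      split_ifs <;> positivity
  calc innerSum a b n
      ≤ ∑ t₂ ∈ range (n + 1), ∑ t₃ ∈ range (n + 1), if t₃ = n - 2 * t₂ then q ^ n else 0 :=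
        sum_le_sum fun t₂ _ => sum_le_sum fun t₃ _ => hterm t₂ t₃
    _ ≤ ∑ _t₂ ∈ range (n + 1), q ^ n := by
        gcongr with t₂
        rw [sum_ite_eq']
        split_ifs
        · rfl
        · exact pow_nonneg hq n
    _ = (n + 1) * q ^ n := by simp

lemma sum_pow_mul_innerSum_le (ha : 0 ≤ a) (hb : 0 ≤ b) (hc : 0 ≤ c) (haq : a ≤ q ^ 2)
    (hbq : b ≤ q) (hcq : c ≤ q) (T : ℕ) :
    ∑ t ∈ range T, c ^ t * innerSum a b (T - 1 - t) ≤ (T : ℝ) ^ 2 * q ^ (T - 1) := by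
  calc ∑ t ∈ range T, c ^ t * innerSum a b (T - 1 - t)
      ≤ ∑ t ∈ range T, q ^ t * ((T - 1 - t : ℕ) + 1 : ℝ) * q ^ (T - 1 - t) := by
        refine sum_le_sum fun t _ => ?_
        rw [mul_assoc]
        exact mul_le_mul (pow_le_pow_left₀ hc hcq t) (innerSum_le_succ_mul_pow ha hb haq hbq _)
          (innerSum_nonneg ha hb _) (pow_nonneg (hc.trans hcq) t)
    _ ≤ ∑ _t ∈ range T, (T : ℝ) * q ^ (T - 1) := by
        refine sum_le_sum fun t ht => ?_
        have ht : t < T := mem_range.mp ht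
        have hpow : q ^ t * q ^ (T - 1 - t) = q ^ (T - 1) := by
          rw [← pow_add]; congr 1; omega
        calc q ^ t * ((T - 1 - t : ℕ) + 1 : ℝ) * q ^ (T - 1 - t)
            = ((T - 1 - t : ℕ) + 1 : ℝ) * q ^ (T - 1) := by rw [← hpow]; ring
          _ ≤ T * q ^ (T - 1) := mul_le_mul_of_nonneg_right
              (by exact_mod_cast (by omega : T - 1 - t + 1 ≤ T)) (pow_nonneg (hc.trans hcq) _)
    _ = (T : ℝ) ^ 2 * q ^ (T - 1) := by simp [sq, mul_assoc]

lemma succ_mul_pow_le_inv_one_sub (hq₀ : 0 ≤ q) (hq₁ : q < 1) (m : ℕ) :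
    (m + 1) * q ^ m ≤ (1 - q)⁻¹ :=
  calc (m + 1) * q ^ m = ∑ _i ∈ range (m + 1), q ^ m := by simp
    _ ≤ ∑ i ∈ range (m + 1), q ^ i := sum_le_sum fun i hi =>
        pow_le_pow_of_le_one hq₀ hq₁.le (Nat.lt_succ_iff.mp (mem_range.mp hi))
    _ ≤ (1 - q)⁻¹ := by
        simpa [← range_eq_Ico] using geom_sum_Ico_le_of_lt_one (m := 0) (n := m + 1) hq₀ hq₁

lemma natCast_mul_pow_half_le (hq₀ : 0 ≤ q) (hq₁ : q < 1) (T : ℕ) :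
    T * q ^ ((T - 1) / 2) ≤ 2 * (1 - q)⁻¹ :=
  calc (T : ℝ) * q ^ ((T - 1) / 2) ≤ 2 * ((((T - 1) / 2 : ℕ) + 1) * q ^ ((T - 1) / 2)) := by
        rw [← mul_assoc]
        gcongr
        exact_mod_cast (by omega : T ≤ 2 * ((T - 1) / 2 + 1))
    _ ≤ 2 * (1 - q)⁻¹ := by gcongr; exact succ_mul_pow_le_inv_one_sub hq₀ hq₁ _

end Bounds

section ChainP

variable {ε₁ ε₂ q : ℝ}

lemma chainP_nonneg (h₁ : ε₁ ∈ Set.Icc (0 : ℝ) 1) (h₂ : ε₂ ∈ Set.Icc (0 : ℝ) 1) (T : ℕ) :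
    0 ≤ chainP ε₁ ε₂ T := by
  obtain ⟨h₁₀, h₁₁⟩ := h₁
  obtain ⟨h₂₀, h₂₁⟩ := h₂
  have hb : 0 ≤ 1 - ε₁ := by linarith
  exact mul_nonneg (by positivity) <| sum_nonneg fun _ _ =>
    mul_nonneg (by positivity) (innerSum_nonneg (by positivity) hb _)

lemma chainP_le_of_le (h₁ : ε₁ ∈ Set.Icc (0 : ℝ) 1) (h₂ : ε₂ ∈ Set.Icc (0 : ℝ) 1)
    (hcq : ε₁ * ε₂ ≤ q) (hbq : 1 - ε₁ ≤ q) (T : ℕ) :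
    chainP ε₁ ε₂ T ≤ ε₁ * (1 - ε₂) ^ 2 * ((T : ℝ) ^ 2 * q ^ (T - 1)) := by
  obtain ⟨h₁₀, h₁₁⟩ := h₁
  obtain ⟨h₂₀, h₂₁⟩ := h₂
  have hb : 0 ≤ 1 - ε₁ := by linarith
  have haq : ε₁ * ε₂ * (1 - ε₁) * (1 - ε₂) ≤ q ^ 2 :=
    calc ε₁ * ε₂ * (1 - ε₁) * (1 - ε₂) ≤ ε₁ * ε₂ * (1 - ε₁) :=
          mul_le_of_le_one_right (by positivity) (by linarith)
      _ ≤ q * q := mul_le_mul hcq hbq hb (hb.trans hbq)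
      _ = q ^ 2 := (sq q).symm
  exact mul_le_mul_of_nonneg_left
    (sum_pow_mul_innerSum_le (by positivity) hb (by positivity) haq hbq hcq T) (by positivity)

lemma chainP_le_mul_pow_half_of_le (h₁ : ε₁ ∈ Set.Icc (0 : ℝ) 1) (h₂ : ε₂ ∈ Set.Icc (0 : ℝ) 1)
    (hcq : ε₁ * ε₂ ≤ q) (hbq : 1 - ε₁ ≤ q) (hq₁ : q < 1) (T : ℕ) :
    chainP ε₁ ε₂ T ≤ ε₁ * (1 - ε₂) ^ 2 * T * q ^ (T / 2) * (2 * (1 - q)⁻¹) := by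
  have hK : 0 ≤ ε₁ * (1 - ε₂) ^ 2 := mul_nonneg h₁.1 (sq_nonneg _)
  have hq₀ : 0 ≤ q := (sub_nonneg.2 h₁.2).trans hbq
  calc chainP ε₁ ε₂ T ≤ ε₁ * (1 - ε₂) ^ 2 * ((T : ℝ) ^ 2 * q ^ (T - 1)) :=
        chainP_le_of_le h₁ h₂ hcq hbq T
    _ = ε₁ * (1 - ε₂) ^ 2 * T * q ^ (T / 2) * (T * q ^ ((T - 1) / 2)) := by
        rw [show q ^ (T - 1) = q ^ (T / 2) * q ^ ((T - 1) / 2) by rw [← pow_add]; congr 1; omega]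
        ring
    _ ≤ ε₁ * (1 - ε₂) ^ 2 * T * q ^ (T / 2) * (2 * (1 - q)⁻¹) :=
        mul_le_mul_of_nonneg_left (natCast_mul_pow_half_le hq₀ hq₁ T) (by positivity)

lemma tendsto_chainP_zero_of_le (h₁ : ε₁ ∈ Set.Icc (0 : ℝ) 1) (h₂ : ε₂ ∈ Set.Icc (0 : ℝ) 1)
    (hcq : ε₁ * ε₂ ≤ q) (hbq : 1 - ε₁ ≤ q) (hq₀ : 0 < q) (hq₁ : q < 1) :
    Tendsto (chainP ε₁ ε₂) atTop (nhds 0) := by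
  have hlim : Tendsto (fun T : ℕ => ε₁ * (1 - ε₂) ^ 2 * q⁻¹ * ((T : ℝ) ^ 2 * q ^ T)) atTop
      (nhds 0) := by
    simpa using (tendsto_pow_const_mul_const_pow_of_abs_lt_one 2
      (by rwa [abs_of_pos hq₀])).const_mul (ε₁ * (1 - ε₂) ^ 2 * q⁻¹)
  refine squeeze_zero' (Eventually.of_forall (chainP_nonneg h₁ h₂))
    ((eventually_ge_atTop 1).mono fun T hT => ?_) hlim
  obtain ⟨n, rfl⟩ := Nat.exists_eq_add_of_le' hT
  calc chainP ε₁ ε₂ (n + 1) ≤ ε₁ * (1 - ε₂) ^ 2 * (((n + 1 : ℕ) : ℝ) ^ 2 * q ^ n) :=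
        chainP_le_of_le h₁ h₂ hcq hbq (n + 1)
    _ = ε₁ * (1 - ε₂) ^ 2 * q⁻¹ * (((n + 1 : ℕ) : ℝ) ^ 2 * q ^ (n + 1)) := by
        field_simp
        ring

lemma max_chainWeights_lt_one (h₁ : ε₁ ∈ Set.Ioo (0 : ℝ) 1) (h₂ : ε₂ ∈ Set.Ioo (0 : ℝ) 1) :
    max (ε₁ * ε₂) (max (ε₁ * ε₂ * (1 - ε₁) * (1 - ε₂)) (1 - ε₁)) < 1 := by
  obtain ⟨h₁₀, h₁₁⟩ := h₁
  obtain ⟨h₂₀, h₂₁⟩ := h₂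
  have hc : ε₁ * ε₂ < 1 := mul_lt_one_of_nonneg_of_lt_one_left h₁₀.le h₁₁ h₂₁.le
  have hca : ε₁ * ε₂ * (1 - ε₁) < 1 :=
    mul_lt_one_of_nonneg_of_lt_one_left (by positivity) hc (by linarith)
  refine max_lt hc (max_lt ?_ (by linarith))
  exact mul_lt_one_of_nonneg_of_lt_one_left (mul_nonneg (by positivity) (by linarith)) hca
    (by linarith)

end ChainP

theorem chainP_decay (ε₁ ε₂ : ℝ)
    (h₁ : ε₁ ∈ Set.Ioo (0:ℝ) 1) (h₂ : ε₂ ∈ Set.Ioo (0:ℝ) 1) :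
    (∃ C > 0, ∀ T : ℕ, 1 ≤ T →
      chainP ε₁ ε₂ T ≤
        ε₁ * (1 - ε₂) ^ 2 * T *
          (max (ε₁ * ε₂)
            (max (ε₁ * ε₂ * (1 - ε₁) * (1 - ε₂)) (1 - ε₁))) ^ (T / 2) * C) ∧
    Tendsto (chainP ε₁ ε₂) atTop (nhds 0) := by
  have hq₁ := max_chainWeights_lt_one h₁ h₂
  set q := max (ε₁ * ε₂) (max (ε₁ * ε₂ * (1 - ε₁) * (1 - ε₂)) (1 - ε₁))
  have hcq : ε₁ * ε₂ ≤ q := le_max_left _ _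
  have hbq : 1 - ε₁ ≤ q := (le_max_right _ _).trans (le_max_right _ _)
  have hq₀ : 0 < q := (mul_pos h₁.1 h₂.1).trans_le hcq
  have hε₁ := Set.Ioo_subset_Icc_self h₁
  have hε₂ := Set.Ioo_subset_Icc_self h₂
  refine ⟨⟨2 * (1 - q)⁻¹, by have := sub_pos.2 hq₁; positivity, fun T _ => ?_⟩,
    tendsto_chainP_zero_of_le hε₁ hε₂ hcq hbq hq₀ hq₁⟩
  exact chainP_le_mul_pow_half_of_le hε₁ hε₂ hcq hbq hq₁ T
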